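/- arXiv:2212.09930 — 2 statements merged into one kernel-verified Lean document; each statement's English description precedes it below -/
import Mathlib

section
/- Let R ∈ ℝ^{n×n} and S ∈ ℝ^{r×r} be matrices such that R and −S have no common eigenvalues. Let U solve RU + US + K = 0 and V solve SV + VR + L = 0 for given K ∈ ℝ^{n×r} and L ∈ ℝ^{r×n}. Then trace(KV) = trace(LU). -/
/-! Eliminating `K = -(RU + US)` and `L = -(SV + VR)`, both traces become `-(tr(RUV) + tr(USV))`
by cyclicity of the trace. -/

open Matrix

theorem Matrix.trace_mul_eq_trace_mul_of_sylvester {m n α : Type*} [Fintype m] [Fintype n]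
    [CommRing α] (R : Matrix m m α) (S : Matrix n n α) (K U : Matrix m n α)
    (L V : Matrix n m α) (hU : R * U + U * S + K = 0) (hV : S * V + V * R + L = 0) :
    trace (K * V) = trace (L * U) := by
  rw [eq_neg_of_add_eq_zero_right hU, eq_neg_of_add_eq_zero_right hV]
  simp only [Matrix.neg_mul, Matrix.add_mul, trace_neg, trace_add, Matrix.mul_assoc]
  rw [trace_mul_cycle' R U V, trace_mul_cycle' S V U, add_comm]

theorem stmt0_general {n r : ℕ} (R : Matrix (Fin n) (Fin n) ℝ) (S : Matrix (Fin r) (Fin r) ℝ)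
    (K : Matrix (Fin n) (Fin r) ℝ) (L : Matrix (Fin r) (Fin n) ℝ)
    (U : Matrix (Fin n) (Fin r) ℝ) (V : Matrix (Fin r) (Fin n) ℝ)
    (hU : R * U + U * S + K = 0)
    (hV : S * V + V * R + L = 0) :
    Matrix.trace (K * V) = Matrix.trace (L * U) :=
  trace_mul_eq_trace_mul_of_sylvester R S K U L V hU hV

theorem stmt0 {n r : ℕ} (R : Matrix (Fin n) (Fin n) ℝ) (S : Matrix (Fin r) (Fin r) ℝ)
    (K : Matrix (Fin n) (Fin r) ℝ) (L : Matrix (Fin r) (Fin n) ℝ)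
    (U : Matrix (Fin n) (Fin r) ℝ) (V : Matrix (Fin r) (Fin n) ℝ)
    (hspec : ∀ μ : ℂ, μ ∈ spectrum ℂ (R.map Complex.ofReal) →
      μ ∉ spectrum ℂ ((-S).map Complex.ofReal))
    (hU : R * U + U * S + K = 0)
    (hV : S * V + V * R + L = 0) :
    Matrix.trace (K * V) = Matrix.trace (L * U) :=
  stmt0_general R S K L U V hU hV
end

section
/- Let A be Hurwitz and let P be the frequency-limited controllability gramian P = (1/2π) ∫_{−Ω}^{Ω} (jνI − A)^{-1} BB^T (jνI − A)^{-*} dν. Then P satisfies the Lyapunov equation A P + P A^T + S_ω[A] B B^T + B B^T S_ω[A^T] = 0, where S_ω[A] = (j/2π) ln((A + jΩI)(A − jΩI)^{-1}). -/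
open Matrix

/-- The principal matrix logarithm, expressed via its standard integral representation. -/
noncomputable def matLog {n : ℕ} (N : Matrix (Fin n) (Fin n) ℂ) : Matrix (Fin n) (Fin n) ℂ :=
  Matrix.of fun i k =>
    ∫ s in (0:ℝ)..1, ((N - 1) * ((s : ℂ) • (N - 1) + 1)⁻¹) i k

/-- The resolventIm `(jν I - A)⁻¹` of a real matrix, as a complex matrix. -/
noncomputable def resolventIm {n : ℕ} (A : Matrix (Fin n) (Fin n) ℝ) (ν : ℝ) :
    Matrix (Fin n) (Fin n) ℂ :=
  (((ν : ℂ) * Complex.I) • (1 : Matrix (Fin n) (Fin n) ℂ) - A.map Complex.ofReal)⁻¹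

/-- The frequency-limited controllability gramian (entrywise integral). -/
noncomputable def flGram {n m : ℕ} (A : Matrix (Fin n) (Fin n) ℝ)
    (B : Matrix (Fin n) (Fin m) ℝ) (Ω : ℝ) : Matrix (Fin n) (Fin n) ℂ :=
  Matrix.of fun i k =>
    ((1 / (2 * Real.pi) : ℝ) : ℂ) *
      ∫ ν in (-Ω)..Ω,
        (resolventIm A ν * B.map Complex.ofReal * (B.map Complex.ofReal)ᴴ *
          (resolventIm A ν)ᴴ) i k

/-- `S_ω[A] = (j/2π) ln((A + jΩI)(A − jΩI)⁻¹)`. -/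
noncomputable def Somega {n : ℕ} (A : Matrix (Fin n) (Fin n) ℝ) (Ω : ℝ) :
    Matrix (Fin n) (Fin n) ℂ :=
  (Complex.I / ((2 * Real.pi : ℝ) : ℂ)) •
    matLog ((A.map Complex.ofReal + ((Ω : ℂ) * Complex.I) • (1 : Matrix (Fin n) (Fin n) ℂ)) *
      (A.map Complex.ofReal - ((Ω : ℂ) * Complex.I) • (1 : Matrix (Fin n) (Fin n) ℂ))⁻¹)

/-!
For `R(ν) = (jνI − A)⁻¹` and any `M`, the resolvent identity `A R = jν R − I` and its adjoint
`Rᴴ Aᵀ = −jν Rᴴ − I` give `A (R M Rᴴ) + (R M Rᴴ) Aᵀ = −(R M + M Rᴴ)`, the `jν` terms cancelling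
because `jν` is purely imaginary. Integrating over `[−Ω, Ω]` yields
`A P + P Aᵀ = −(S M + M Sᵀ)` with `S = (1/2π) ∫ R`, using `(∫ R)ᵀ = ∫ Rᴴ` (substitute `ν ↦ −ν`).
That `S` is `S_ω[A]` comes from the integral representation of the logarithm: for the Cayley
transform `N = (A + jΩI)(A − jΩI)⁻¹`, the integrand `(N − I)(s(N − I) + I)⁻¹` equals
`−2jΩ R(Ω(1 − 2s))`, and `ν = Ω(1 − 2s)` maps `[0, 1]` onto `[−Ω, Ω]`.
-/

section MatrixIntegral

variable {𝕜 ι κ η : Type*} [RCLike 𝕜]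

noncomputable def matrixIntegral (F : ℝ → Matrix ι κ 𝕜) (a b : ℝ) : Matrix ι κ 𝕜 :=
  Matrix.of fun i k => ∫ t in a..b, F t i k

variable {F G : ℝ → Matrix ι κ 𝕜} {a b : ℝ}

theorem transpose_matrixIntegral :
    (matrixIntegral F a b)ᵀ = matrixIntegral (fun t => (F t)ᵀ) a b :=
  rfl

@[simp]
theorem matrixIntegral_zero : matrixIntegral (fun _ => (0 : Matrix ι κ 𝕜)) a b = 0 := by
  ext i k
  simp [matrixIntegral]

theorem matrixIntegral_smul (c : 𝕜) :
    matrixIntegral (fun t => c • F t) a b = c • matrixIntegral F a b := by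
  ext i k
  simp [matrixIntegral, intervalIntegral.integral_const_mul]

theorem matrixIntegral_comp_neg :
    matrixIntegral (fun t => F (-t)) a b = matrixIntegral F (-b) (-a) := by
  ext i k
  exact intervalIntegral.integral_comp_neg (fun t => F t i k)

theorem matrixIntegral_comp_sub_mul {c : ℝ} (hc : c ≠ 0) (d : ℝ) :
    matrixIntegral (fun t => F (d - c * t)) a b =
      ((c⁻¹ : ℝ) : 𝕜) • matrixIntegral F (d - c * b) (d - c * a) := by
  ext i k
  simp [matrixIntegral, intervalIntegral.integral_comp_sub_mul (fun t => F t i k) hc,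
    RCLike.real_smul_eq_coe_mul]

theorem matrixIntegral_add (hF : Continuous F) (hG : Continuous G) :
    matrixIntegral (fun t => F t + G t) a b = matrixIntegral F a b + matrixIntegral G a b := by
  ext i k
  exact intervalIntegral.integral_add ((hF.matrix_elem i k).intervalIntegrable a b)
    ((hG.matrix_elem i k).intervalIntegrable a b)

theorem mul_matrixIntegral [Fintype ι] (C : Matrix η ι 𝕜) (hF : Continuous F) :
    C * matrixIntegral F a b = matrixIntegral (fun t => C * F t) a b := by
  ext i k
  simp only [matrixIntegral, mul_apply, of_apply]
  rw [intervalIntegral.integral_finsetSum fun j _ =>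
    ((hF.matrix_elem j k).intervalIntegrable a b).const_mul _]
  simp [intervalIntegral.integral_const_mul]

theorem matrixIntegral_mul [Fintype κ] (C : Matrix κ η 𝕜) (hF : Continuous F) :
    matrixIntegral F a b * C = matrixIntegral (fun t => F t * C) a b := by
  ext i k
  simp only [matrixIntegral, mul_apply, of_apply]
  rw [intervalIntegral.integral_finsetSum fun j _ =>
    ((hF.matrix_elem i j).intervalIntegrable a b).mul_const _]
  simp [intervalIntegral.integral_mul_const]

end MatrixIntegral

section Resolvent

variable {n : Type*} [Fintype n] [DecidableEq n]

theorem isUnit_smul_one_sub_of_re_nonneg {X : Matrix n n ℂ}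
    (hX : ∀ μ ∈ spectrum ℂ X, μ.re < 0) {z : ℂ} (hz : 0 ≤ z.re) :
    IsUnit (z • (1 : Matrix n n ℂ) - X) := by
  have hzX : z ∉ spectrum ℂ X := fun h => (hX z h).not_ge hz
  rwa [spectrum.notMem_iff, Algebra.algebraMap_eq_smul_one] at hzX

theorem lyapunov_resolvent_sandwich {X R : Matrix n n ℂ} {z : ℂ} (hz : z.re = 0)
    (hR : (z • 1 - X) * R = 1) (M : Matrix n n ℂ) :
    X * (R * M * Rᴴ) + R * M * Rᴴ * Xᴴ + R * M + M * Rᴴ = 0 := by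
  have hXR : X * R = z • R - 1 := by
    rw [← hR, sub_mul, smul_mul, one_mul, sub_sub_cancel]
  have hRX : Rᴴ * Xᴴ = star z • Rᴴ - 1 := by
    rw [← conjTranspose_mul, hXR, conjTranspose_sub, conjTranspose_smul, conjTranspose_one]
  have hzz : z + star z = 0 := by
    rw [Complex.star_def, Complex.add_conj, hz]; simp
  calc X * (R * M * Rᴴ) + R * M * Rᴴ * Xᴴ + R * M + M * Rᴴ
      = X * R * M * Rᴴ + R * M * (Rᴴ * Xᴴ) + R * M + M * Rᴴ := by
        simp only [Matrix.mul_assoc]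
    _ = (z + star z) • (R * M * Rᴴ) := by
        rw [hXR, hRX]
        simp only [sub_mul, mul_sub, smul_mul, Matrix.mul_smul, one_mul, mul_one, add_smul,
          Matrix.mul_assoc]
        abel
    _ = 0 := by rw [hzz, zero_smul]

theorem cayley_sub_one_mul_inv {K : Type*} [CommRing K] (X : Matrix n n K) (c s : K)
    (h : IsUnit (X - c • 1)) :
    ((X + c • 1) * (X - c • 1)⁻¹ - 1) * (s • ((X + c • 1) * (X - c • 1)⁻¹ - 1) + 1)⁻¹ =
      (2 * c) • (X + ((2 * s - 1) * c) • 1)⁻¹ := by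
  set D := X - c • 1
  have hD : IsUnit D.det := (isUnit_iff_isUnit_det D).mp h
  have hN : (X + c • 1) * D⁻¹ - 1 = (2 * c) • D⁻¹ := by
    rw [show X + c • 1 = D + (2 * c) • 1 by simp only [D]; module, add_mul,
      mul_nonsing_inv D hD, smul_mul, one_mul, add_sub_cancel_left]
  have hsN : s • ((2 * c) • D⁻¹) + 1 = (X + ((2 * s - 1) * c) • 1) * D⁻¹ := by
    rw [show X + ((2 * s - 1) * c) • 1 = D + (s * (2 * c)) • 1 by simp only [D]; module,
      add_mul, mul_nonsing_inv D hD, smul_mul, one_mul, smul_smul, add_comm]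
  rw [hN, hsN, Matrix.mul_inv_rev, nonsing_inv_nonsing_inv D hD, smul_mul]
  exact congrArg ((2 * c) • ·) (nonsing_inv_mul_cancel_left _ _ hD)

end Resolvent

section FrequencyLimited

variable {n : ℕ} (A : Matrix (Fin n) (Fin n) ℝ)

theorem conjTranspose_map_ofReal {m : ℕ} (B : Matrix (Fin n) (Fin m) ℝ) :
    (B.map Complex.ofReal)ᴴ = (B.map Complex.ofReal)ᵀ := by
  ext i j
  simp

theorem smul_one_sub_mul_resolventIm (hA : ∀ μ ∈ spectrum ℂ (A.map Complex.ofReal), μ.re < 0)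
    (ν : ℝ) :
    (((ν : ℂ) * Complex.I) • (1 : Matrix (Fin n) (Fin n) ℂ) - A.map Complex.ofReal) *
      resolventIm A ν = 1 :=
  mul_nonsing_inv _ <|
    (isUnit_iff_isUnit_det _).mp (isUnit_smul_one_sub_of_re_nonneg hA (by simp))

theorem continuous_resolventIm (hA : ∀ μ ∈ spectrum ℂ (A.map Complex.ofReal), μ.re < 0) :
    Continuous (resolventIm A) := by
  have hD : Continuous fun ν : ℝ =>
      ((ν : ℂ) * Complex.I) • (1 : Matrix (Fin n) (Fin n) ℂ) - A.map Complex.ofReal := by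
    fun_prop
  refine continuous_iff_continuousAt.mpr fun ν =>
    (continuousAt_matrix_inv _ ?_).comp hD.continuousAt
  rw [Ring.inverse_eq_inv']
  exact continuousAt_inv₀ ((isUnit_iff_isUnit_det _).mp
    (isUnit_smul_one_sub_of_re_nonneg hA (by simp))).ne_zero

theorem conjTranspose_resolventIm (ν : ℝ) :
    (resolventIm A ν)ᴴ = (resolventIm A (-ν))ᵀ := by
  rw [resolventIm, resolventIm, conjTranspose_nonsing_inv, transpose_nonsing_inv]
  simp only [conjTranspose_sub, conjTranspose_smul, conjTranspose_one, transpose_sub,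
    transpose_smul, transpose_one, conjTranspose_map_ofReal]
  simp

theorem transpose_matrixIntegral_resolventIm (Ω : ℝ) :
    (matrixIntegral (resolventIm A) (-Ω) Ω)ᵀ =
      matrixIntegral (fun ν => (resolventIm A ν)ᴴ) (-Ω) Ω := by
  simp_rw [transpose_matrixIntegral, conjTranspose_resolventIm]
  rw [matrixIntegral_comp_neg (F := fun ν => (resolventIm A ν)ᵀ), neg_neg]

theorem flGram_eq_smul_matrixIntegral {m : ℕ} (B : Matrix (Fin n) (Fin m) ℝ) (Ω : ℝ) :
    flGram A B Ω = ((1 / (2 * Real.pi) : ℝ) : ℂ) • matrixIntegral (fun ν => resolventIm A ν *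
      (B.map Complex.ofReal * (B.map Complex.ofReal)ᵀ) * (resolventIm A ν)ᴴ) (-Ω) Ω := by
  ext i k
  simp [flGram, matrixIntegral, conjTranspose_map_ofReal, Matrix.mul_assoc]

theorem matLog_eq_matrixIntegral (N : Matrix (Fin n) (Fin n) ℂ) :
    matLog N = matrixIntegral (fun s => (N - 1) * ((s : ℂ) • (N - 1) + 1)⁻¹) 0 1 :=
  rfl

theorem cayley_log_integrand_eq_smul_resolventIm
    (hA : ∀ μ ∈ spectrum ℂ (A.map Complex.ofReal), μ.re < 0) (Ω s : ℝ) :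
    ((A.map Complex.ofReal + ((Ω : ℂ) * Complex.I) • 1) *
        (A.map Complex.ofReal - ((Ω : ℂ) * Complex.I) • 1)⁻¹ - 1) *
      ((s : ℂ) • ((A.map Complex.ofReal + ((Ω : ℂ) * Complex.I) • 1) *
        (A.map Complex.ofReal - ((Ω : ℂ) * Complex.I) • 1)⁻¹ - 1) + 1)⁻¹ =
      (-(2 * Ω * Complex.I)) • resolventIm A (Ω - 2 * Ω * s) := by
  set Ac := A.map Complex.ofReal
  have hD : IsUnit (Ac - ((Ω : ℂ) * Complex.I) • 1) := by
    simpa using (isUnit_smul_one_sub_of_re_nonneg hA (z := Ω * Complex.I) (by simp)).neg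
  have hneg : -(Ac + ((2 * (s : ℂ) - 1) * ((Ω : ℂ) * Complex.I)) • 1) =
      (((Ω - 2 * Ω * s : ℝ) : ℂ) * Complex.I) • 1 - Ac := by
    push_cast
    module
  have hE : (Ac + ((2 * (s : ℂ) - 1) * ((Ω : ℂ) * Complex.I)) • 1) *
      -resolventIm A (Ω - 2 * Ω * s) = 1 := by
    rw [mul_neg, ← neg_mul, hneg, smul_one_sub_mul_resolventIm A hA]
  rw [cayley_sub_one_mul_inv _ _ _ hD, inv_eq_right_inv hE, smul_neg, ← neg_smul]
  congr 1
  ring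

theorem Somega_eq_smul_matrixIntegral
    (hA : ∀ μ ∈ spectrum ℂ (A.map Complex.ofReal), μ.re < 0) {Ω : ℝ} (hΩ : Ω ≠ 0) :
    Somega A Ω = ((1 / (2 * Real.pi) : ℝ) : ℂ) • matrixIntegral (resolventIm A) (-Ω) Ω := by
  rw [Somega, matLog_eq_matrixIntegral]
  simp_rw [cayley_log_integrand_eq_smul_resolventIm A hA]
  rw [matrixIntegral_smul, matrixIntegral_comp_sub_mul (mul_ne_zero two_ne_zero hΩ),
    show Ω - 2 * Ω * 1 = -Ω by ring, show Ω - 2 * Ω * 0 = Ω by ring, smul_smul, smul_smul]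
  congr 1
  have hΩ' : (Ω : ℂ) ≠ 0 := Complex.ofReal_ne_zero.mpr hΩ
  push_cast
  field_simp
  simp [Complex.I_sq, hΩ']

end FrequencyLimited

theorem stmt9 {n m : ℕ} (A : Matrix (Fin n) (Fin n) ℝ) (B : Matrix (Fin n) (Fin m) ℝ)
    (Ω : ℝ) (hΩ : 0 < Ω)
    (hA : ∀ μ ∈ spectrum ℂ (A.map Complex.ofReal), μ.re < 0)
    (P : Matrix (Fin n) (Fin n) ℂ) (hP : P = flGram A B Ω) :
    A.map Complex.ofReal * P + P * (A.map Complex.ofReal)ᵀ +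
      Somega A Ω * B.map Complex.ofReal * (B.map Complex.ofReal)ᵀ +
      B.map Complex.ofReal * (B.map Complex.ofReal)ᵀ * (Somega A Ω)ᵀ = 0 := by
  subst hP
  have hR : Continuous (resolventIm A) := continuous_resolventIm A hA
  have hpointwise : ∀ ν M, A.map Complex.ofReal * (resolventIm A ν * M * (resolventIm A ν)ᴴ) +
      resolventIm A ν * M * (resolventIm A ν)ᴴ * (A.map Complex.ofReal)ᵀ +
      resolventIm A ν * M + M * (resolventIm A ν)ᴴ = 0 := fun ν M => by
    rw [← conjTranspose_map_ofReal]
    exact lyapunov_resolvent_sandwich (by simp) (smul_one_sub_mul_resolventIm A hA ν) M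
  rw [Matrix.mul_assoc (Somega A Ω), flGram_eq_smul_matrixIntegral,
    Somega_eq_smul_matrixIntegral A hA hΩ.ne', transpose_smul,
    transpose_matrixIntegral_resolventIm, Matrix.mul_smul, Matrix.smul_mul, Matrix.smul_mul,
    Matrix.mul_smul, mul_matrixIntegral _ (by fun_prop), matrixIntegral_mul _ (by fun_prop),
    matrixIntegral_mul _ hR, mul_matrixIntegral _ hR.matrix_conjTranspose, ← smul_add,
    ← smul_add, ← smul_add, ← matrixIntegral_add (by fun_prop) (by fun_prop),
    ← matrixIntegral_add (by fun_prop) (by fun_prop),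
    ← matrixIntegral_add (by fun_prop) (by fun_prop)]
  simp only [hpointwise, matrixIntegral_zero, smul_zero]
end
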